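/- Fix N > 2 and let M_μ be the recursively defined N^μ × N^μ matrices of N-th roots of unity with N^{-μ/2} M_μ unitary. Define M(x) = Σ_{μ=1}^∞ (N^{-3μ/2}/μ²) M_μ applied to consecutive blocks of variables of lengths N, N², N³, …. Then |M(x)| ≤ Σ_{μ=1}^∞ 1/μ² = π²/6 for all x in the closed unit polydisc 𝒮, while the sum of the moduli of the coefficients of M equals Σ_{μ=1}^∞ N^{μ/2}/μ² = ∞. -/

import Mathlib

open Filter Topology

attribute [local instance] Classical.propDecidable

/-- Littlewood's matrices for a fixed `N`: `littleM N 1 = (e^{2πi rs/N})_{r,s=1,…,N}` and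
`littleM N (μ+1)` is the block matrix whose `(r,s)` block is `e^{2πi rs/N} · littleM N μ`;
the index set of `littleM N μ` is `Fin μ → Fin N`. -/
noncomputable def littleM (N : ℕ) : (μ : ℕ) → Matrix (Fin μ → Fin N) (Fin μ → Fin N) ℂ
  | 0 => 1
  | (μ + 1) => fun r s =>
      Complex.exp (2 * (Real.pi : ℂ) * Complex.I *
          ((((r 0 : ℕ) : ℂ) + 1) * (((s 0 : ℕ) : ℂ) + 1)) / (N : ℂ)) *
        littleM N μ (fun k => r k.succ) (fun k => s k.succ)

/-- `blockStartN N μ` is the index in `ℕ` where the `μ`-th block (of length `N^{μ+1}`,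
`μ = 0, 1, 2, …`, corresponding to the paper's blocks of lengths `N, N², N³, …`) starts. -/
def blockStartN (N μ : ℕ) : ℕ := ∑ β ∈ Finset.range μ, N ^ (β + 1)

/-- The coefficients of Littlewood's quadratic form
`M(x) = ∑_μ (N^{-3(μ+1)/2} / (μ+1)²) M_{μ+1}`, applied to consecutive blocks of variables
of lengths `N, N², N³, …`. -/
noncomputable def littleCoef (N : ℕ) (m n : ℕ) : ℂ :=
  if h : ∃ μ, (blockStartN N μ ≤ m ∧ m < blockStartN N (μ + 1)) ∧
      (blockStartN N μ ≤ n ∧ n < blockStartN N (μ + 1)) then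
    ((((N : ℝ) ^ (-(3 * ((h.choose : ℝ) + 1)) / 2) / ((h.choose : ℝ) + 1) ^ 2 : ℝ)) : ℂ) *
      littleM N (h.choose + 1)
        (finFunctionFinEquiv.symm ⟨m - blockStartN N h.choose, by
          obtain ⟨⟨h1, h2⟩, h3, h4⟩ := h.choose_spec
          have e : blockStartN N (h.choose + 1) = blockStartN N h.choose + N ^ (h.choose + 1) :=
            Finset.sum_range_succ _ _
          omega⟩)
        (finFunctionFinEquiv.symm ⟨n - blockStartN N h.choose, by
          obtain ⟨⟨h1, h2⟩, h3, h4⟩ := h.choose_spec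
          have e : blockStartN N (h.choose + 1) = blockStartN N h.choose + N ^ (h.choose + 1) :=
            Finset.sum_range_succ _ _
          omega⟩)
  else 0

/-!
`littleM N μ` is, up to reindexing, the `μ`-th Kronecker power of the character matrix
`(ζ^{rs})` of `ℤ/N`, so `N^{-μ/2} littleM N μ` is unitary. By Cauchy–Schwarz the μ-th block
of the form is then at most `N^{3μ/2}` on the polydisc, and the weight `N^{-3μ/2}/μ²` turns this
into `1/μ²`; dominated convergence for series gives the convergence of the square partial sums.
On the other hand the `N^{2μ}` unimodular entries of the μ-th block contribute `N^{μ/2}/μ²` to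
the sum of the moduli of the coefficients, which is unbounded.
-/

open Matrix Kronecker

noncomputable def rootMatrix (N : ℕ) : Matrix (Fin N) (Fin N) ℂ := fun r s =>
  Complex.exp (2 * (Real.pi : ℂ) * Complex.I *
    ((((r : ℕ) : ℂ) + 1) * (((s : ℕ) : ℂ) + 1)) / (N : ℂ))

lemma littleM_succ (N μ : ℕ) :
    littleM N (μ + 1) = (rootMatrix N ⊗ₖ littleM N μ).submatrix
      (Fin.consEquiv fun _ => Fin N).symm (Fin.consEquiv fun _ => Fin N).symm := rfl

lemma rootMatrix_apply (N : ℕ) (r s : Fin N) :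
    rootMatrix N r s =
      Complex.exp (2 * Real.pi * Complex.I / N) ^ ((r + 1 : ℕ) * (s + 1 : ℕ)) := by
  rw [rootMatrix, ← Complex.exp_nat_mul]
  congr 1
  push_cast
  ring

lemma norm_rootMatrix_apply (N : ℕ) (r s : Fin N) : ‖rootMatrix N r s‖ = 1 := by
  rw [rootMatrix_apply, norm_pow,
    (Complex.isPrimitiveRoot_exp N r.pos.ne').norm'_eq_one r.pos.ne', one_pow]

lemma norm_littleM_apply (N : ℕ) : ∀ (μ : ℕ) (r s : Fin μ → Fin N), ‖littleM N μ r s‖ = 1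
  | 0, r, s => by
    rw [Subsingleton.elim r s]
    simp [littleM]
  | μ + 1, r, s => by
    rw [littleM_succ]
    simp [norm_rootMatrix_apply, norm_littleM_apply N μ]

lemma sum_pow_succ_eq_zero {K : Type*} [Field K] {w : K} {N : ℕ} (hw : w ^ N = 1)
    (hw1 : w ≠ 1) : ∑ r : Fin N, w ^ ((r : ℕ) + 1) = 0 := by
  simp_rw [pow_succ, ← Finset.sum_mul, Fin.sum_univ_eq_sum_range (w ^ ·), geom_sum_eq hw1, hw]
  simp

lemma rootMatrix_conjTranspose_mul_self {N : ℕ} (hN : N ≠ 0) :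
    (rootMatrix N)ᴴ * rootMatrix N = (N : ℂ) • 1 := by
  obtain ⟨ζ, hζ, hentry⟩ : ∃ ζ : ℂ, IsPrimitiveRoot ζ N ∧
      ∀ r s, rootMatrix N r s = ζ ^ ((r + 1 : ℕ) * (s + 1 : ℕ)) :=
    ⟨_, Complex.isPrimitiveRoot_exp N hN, rootMatrix_apply N⟩
  have hζ0 : ζ ≠ 0 := hζ.ne_zero hN
  have hstar : star ζ = ζ⁻¹ := (Complex.inv_eq_conj (hζ.norm'_eq_one hN)).symm
  ext a b
  set w := (ζ ^ ((a : ℕ) + 1))⁻¹ * ζ ^ ((b : ℕ) + 1)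
  have hterm : ∀ r : Fin N, star (rootMatrix N r a) * rootMatrix N r b = w ^ ((r : ℕ) + 1) := by
    intro r
    simp only [hentry, star_pow, hstar, w]
    ring
  simp only [mul_apply, conjTranspose_apply, hterm, Matrix.smul_apply, one_apply, smul_eq_mul]
  split_ifs with hab
  · subst hab
    simp [w, hζ0]
  · rw [mul_zero]
    refine sum_pow_succ_eq_zero ?_ fun h => hab (Fin.ext (hζ.pow_inj a.isLt b.isLt ?_))
    · simp only [w, mul_pow, inv_pow, pow_right_comm _ _ N, hζ.pow_eq_one, one_pow, inv_one,
        mul_one]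
    · rw [inv_mul_eq_one₀ (pow_ne_zero _ hζ0), pow_succ, pow_succ] at h
      exact mul_right_cancel₀ hζ0 h

lemma littleM_conjTranspose_mul_self {N : ℕ} (hN : N ≠ 0) (μ : ℕ) :
    (littleM N μ)ᴴ * littleM N μ = ((N : ℂ) ^ μ) • 1 := by
  induction μ with
  | zero => simp [littleM]
  | succ μ ih =>
    rw [littleM_succ, conjTranspose_submatrix, submatrix_mul_equiv, conjTranspose_kronecker,
      ← mul_kronecker_mul, rootMatrix_conjTranspose_mul_self hN, ih, smul_kronecker,
      kronecker_smul, one_kronecker_one, smul_smul, ← pow_succ',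
      ← submatrix_one_equiv (Fin.consEquiv fun _ => Fin N).symm]
    rfl

section QuadraticForm

variable {𝕜 : Type*} [RCLike 𝕜] {m n : Type*} [Fintype m] [Fintype n]

lemma star_dotProduct_self_eq (v : n → 𝕜) : star v ⬝ᵥ v = ((∑ i, ‖v i‖ ^ 2 : ℝ) : 𝕜) := by
  simp [dotProduct, RCLike.conj_mul]

lemma sum_norm_sq_le_card {v : n → 𝕜} (hv : ∀ i, ‖v i‖ ≤ 1) :
    ∑ i, ‖v i‖ ^ 2 ≤ Fintype.card n := by
  simpa using Finset.sum_le_card_nsmul Finset.univ _ 1 fun i _ =>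
    pow_le_one₀ (norm_nonneg (v i)) (hv i)

lemma sum_norm_sq_mulVec [DecidableEq n] {A : Matrix m n 𝕜} {c : ℝ}
    (hA : Aᴴ * A = (c : 𝕜) • 1) (y : n → 𝕜) :
    ∑ i, ‖(A *ᵥ y) i‖ ^ 2 = c * ∑ j, ‖y j‖ ^ 2 := by
  apply RCLike.ofReal_injective (K := 𝕜)
  rw [← star_dotProduct_self_eq, RCLike.ofReal_mul, ← star_dotProduct_self_eq, star_mulVec,
    ← dotProduct_mulVec, mulVec_mulVec, hA, smul_mulVec, one_mulVec, dotProduct_smul,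
    smul_eq_mul]

theorem norm_dotProduct_mulVec_le [DecidableEq n] {A : Matrix m n 𝕜} {c : ℝ} (hc : 0 ≤ c)
    (hA : Aᴴ * A = (c : 𝕜) • 1) {x : m → 𝕜} {y : n → 𝕜} (hx : ∀ i, ‖x i‖ ≤ 1)
    (hy : ∀ j, ‖y j‖ ≤ 1) :
    ‖x ⬝ᵥ A *ᵥ y‖ ≤ √(Fintype.card m) * √(Fintype.card n) * √c := by
  calc ‖x ⬝ᵥ A *ᵥ y‖ ≤ ∑ i, ‖x i‖ * ‖(A *ᵥ y) i‖ :=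
        (norm_sum_le _ _).trans_eq (by simp only [norm_mul])
    _ ≤ √(∑ i, ‖x i‖ ^ 2) * √(∑ i, ‖(A *ᵥ y) i‖ ^ 2) := Real.sum_mul_le_sqrt_mul_sqrt _ _ _
    _ ≤ √(Fintype.card m) * √(c * Fintype.card n) := by
        rw [sum_norm_sq_mulVec hA]
        gcongr
        exacts [sum_norm_sq_le_card hx, sum_norm_sq_le_card hy]
    _ = √(Fintype.card m) * √(Fintype.card n) * √c := by
        rw [Real.sqrt_mul hc, mul_comm √c, mul_assoc]

end QuadraticForm

lemma blockStartN_succ (N μ : ℕ) :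
    blockStartN N (μ + 1) = blockStartN N μ + N ^ (μ + 1) :=
  Finset.sum_range_succ _ _

lemma blockStartN_strictMono {N : ℕ} (hN : 0 < N) : StrictMono (blockStartN N) :=
  strictMono_nat_of_lt_succ fun μ => by
    rw [blockStartN_succ]
    exact Nat.lt_add_of_pos_right (pow_pos hN _)

noncomputable def littleWeight (N μ : ℕ) : ℝ :=
  (N : ℝ) ^ (-(3 * ((μ : ℝ) + 1)) / 2) / ((μ : ℝ) + 1) ^ 2

lemma littleWeight_eq (N μ : ℕ) :
    littleWeight N μ = 1 / (√N ^ (3 * (μ + 1)) * ((μ : ℝ) + 1) ^ 2) := by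
  have hN' : (0 : ℝ) ≤ N := Nat.cast_nonneg N
  rw [littleWeight, one_div, mul_inv, div_eq_mul_inv, Real.sqrt_eq_rpow,
    ← Real.rpow_natCast _ (3 * (μ + 1)), ← Real.rpow_mul hN', ← Real.rpow_neg hN']
  push_cast
  ring_nf

lemma littleCoef_blockStartN_add {N : ℕ} (hN : 0 < N) (μ : ℕ) (i j : Fin (N ^ (μ + 1))) :
    littleCoef N (blockStartN N μ + i) (blockStartN N μ + j) =
      littleWeight N μ * littleM N (μ + 1) (finFunctionFinEquiv.symm i)
        (finFunctionFinEquiv.symm j) := by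
  have hmem : ∀ k : Fin (N ^ (μ + 1)), blockStartN N μ ≤ blockStartN N μ + k ∧
      blockStartN N μ + k < blockStartN N (μ + 1) := fun k => by
    rw [blockStartN_succ]; omega
  have hex : ∃ κ, (blockStartN N κ ≤ blockStartN N μ + i ∧
      blockStartN N μ + i < blockStartN N (κ + 1)) ∧ (blockStartN N κ ≤ blockStartN N μ + j ∧
      blockStartN N μ + j < blockStartN N (κ + 1)) := ⟨μ, hmem i, hmem j⟩
  have hchoose : hex.choose = μ := by
    have h1 := (blockStartN_strictMono hN).lt_iff_lt.1
      (hex.choose_spec.1.1.trans_lt (hmem i).2)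
    have h2 := (blockStartN_strictMono hN).lt_iff_lt.1
      ((hmem i).1.trans_lt hex.choose_spec.1.2)
    omega
  -- the block index `hex.choose` occurs in the types of the indices, so it is generalized first
  have hsubst : ∀ κ, κ = μ → ∀ (i' j' : Fin (N ^ (κ + 1))), (i' : ℕ) = i → (j' : ℕ) = j →
      (littleWeight N κ : ℂ) * littleM N (κ + 1) (finFunctionFinEquiv.symm i')
        (finFunctionFinEquiv.symm j') =
      littleWeight N μ * littleM N (μ + 1) (finFunctionFinEquiv.symm i)
        (finFunctionFinEquiv.symm j) := by
    rintro κ rfl i' j' hi hj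
    rw [Fin.ext hi, Fin.ext hj]
  rw [littleCoef, dif_pos hex]
  exact hsubst _ hchoose _ _ (by simp [hchoose]) (by simp [hchoose])

lemma littleCoef_eq_zero_of_lt_of_le {N : ℕ} (hN : 0 < N) {m n σ : ℕ}
    (hm : m < blockStartN N σ) (hn : blockStartN N σ ≤ n) : littleCoef N m n = 0 := by
  refine dif_neg ?_
  rintro ⟨μ, ⟨hμm, -⟩, -, hnμ⟩
  have h1 := (blockStartN_strictMono hN).lt_iff_lt.1 (hμm.trans_lt hm)
  have h2 := (blockStartN_strictMono hN).lt_iff_lt.1 (hn.trans_lt hnμ)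
  omega

lemma littleCoef_eq_zero_of_le_of_lt {N : ℕ} (hN : 0 < N) {m n σ : ℕ}
    (hm : blockStartN N σ ≤ m) (hn : n < blockStartN N σ) : littleCoef N m n = 0 := by
  refine dif_neg ?_
  rintro ⟨μ, ⟨-, hmμ⟩, hμn, -⟩
  have h1 := (blockStartN_strictMono hN).lt_iff_lt.1 (hμn.trans_lt hn)
  have h2 := (blockStartN_strictMono hN).lt_iff_lt.1 (hm.trans_lt hmμ)
  omega

noncomputable def littleForm (N : ℕ) (x : ℕ → ℂ) (M : ℕ) : ℂ :=
  ∑ m ∈ Finset.range M, ∑ n ∈ Finset.range M, littleCoef N m n * x m * x n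

noncomputable def littleBlockForm (N : ℕ) (x : ℕ → ℂ) (μ : ℕ) : ℂ :=
  ∑ i ∈ Finset.range (N ^ (μ + 1)), ∑ j ∈ Finset.range (N ^ (μ + 1)),
    littleCoef N (blockStartN N μ + i) (blockStartN N μ + j) *
      x (blockStartN N μ + i) * x (blockStartN N μ + j)

lemma littleForm_blockStartN {N : ℕ} (hN : 0 < N) (x : ℕ → ℂ) (σ : ℕ) :
    littleForm N x (blockStartN N σ) = ∑ μ ∈ Finset.range σ, littleBlockForm N x μ := by
  induction σ with
  | zero => simp [littleForm, blockStartN]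
  | succ σ ih =>
    have hleft : ∑ m ∈ Finset.range (blockStartN N σ), ∑ j ∈ Finset.range (N ^ (σ + 1)),
        littleCoef N m (blockStartN N σ + j) * x m * x (blockStartN N σ + j) = 0 :=
      Finset.sum_eq_zero fun m hm => Finset.sum_eq_zero fun j _ => by
        rw [littleCoef_eq_zero_of_lt_of_le hN (Finset.mem_range.1 hm) (Nat.le_add_right _ _),
          zero_mul, zero_mul]
    have hright : ∑ i ∈ Finset.range (N ^ (σ + 1)), ∑ n ∈ Finset.range (blockStartN N σ),
        littleCoef N (blockStartN N σ + i) n * x (blockStartN N σ + i) * x n = 0 :=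
      Finset.sum_eq_zero fun i _ => Finset.sum_eq_zero fun n hn => by
        rw [littleCoef_eq_zero_of_le_of_lt hN (Nat.le_add_right _ _) (Finset.mem_range.1 hn),
          zero_mul, zero_mul]
    rw [Finset.sum_range_succ, ← ih, littleForm, littleForm, littleBlockForm, blockStartN_succ]
    simp only [Finset.sum_range_add, Finset.sum_add_distrib, hleft, hright]
    ring

lemma littleForm_eq_indicator (N : ℕ) (x : ℕ → ℂ) {M L : ℕ} (h : M ≤ L) :
    littleForm N x M = littleForm N ((Set.Iio M).indicator x) L := by
  obtain ⟨k, rfl⟩ := Nat.exists_eq_add_of_le h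
  simp only [littleForm, Finset.sum_range_add, Set.indicator_of_notMem
    (Set.notMem_Iio.2 (Nat.le_add_right M _)), mul_zero, zero_mul, Finset.sum_const_zero,
    add_zero]
  refine Finset.sum_congr rfl fun m hm => Finset.sum_congr rfl fun n hn => ?_
  rw [Set.indicator_of_mem (Set.mem_Iio.2 (Finset.mem_range.1 hm)),
    Set.indicator_of_mem (Set.mem_Iio.2 (Finset.mem_range.1 hn))]

lemma littleForm_eq_tsum {N : ℕ} (hN : 0 < N) (x : ℕ → ℂ) (M : ℕ) :
    littleForm N x M = ∑' μ, littleBlockForm N ((Set.Iio M).indicator x) μ := by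
  rw [littleForm_eq_indicator N x ((blockStartN_strictMono hN).le_apply (x := M)),
    littleForm_blockStartN hN, tsum_eq_sum fun μ hμ => ?_]
  have hle : M ≤ blockStartN N μ :=
    (not_lt.1 (Finset.mem_range.not.1 hμ)).trans (blockStartN_strictMono hN).le_apply
  refine Finset.sum_eq_zero fun i _ => Finset.sum_eq_zero fun j _ => ?_
  rw [Set.indicator_of_notMem (Set.notMem_Iio.2 (hle.trans (Nat.le_add_right _ _))), mul_zero,
    zero_mul]

lemma littleBlockForm_indicator_of_le (N : ℕ) (x : ℕ → ℂ) {M μ : ℕ}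
    (h : blockStartN N (μ + 1) ≤ M) :
    littleBlockForm N ((Set.Iio M).indicator x) μ = littleBlockForm N x μ := by
  have hmem : ∀ i ∈ Finset.range (N ^ (μ + 1)), blockStartN N μ + i ∈ Set.Iio M := fun i hi =>
    (blockStartN_succ N μ ▸ Nat.add_lt_add_left (Finset.mem_range.1 hi) _).trans_le h
  refine Finset.sum_congr rfl fun i hi => Finset.sum_congr rfl fun j hj => ?_
  rw [Set.indicator_of_mem (hmem i hi), Set.indicator_of_mem (hmem j hj)]

lemma littleBlockForm_eq_littleWeight_mul {N : ℕ} (hN : 0 < N) (x : ℕ → ℂ) (μ : ℕ) :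
    littleBlockForm N x μ = littleWeight N μ *
      ((fun r => x (blockStartN N μ + finFunctionFinEquiv r)) ⬝ᵥ
        littleM N (μ + 1) *ᵥ fun r => x (blockStartN N μ + finFunctionFinEquiv r)) := by
  simp only [littleBlockForm, Finset.sum_range, dotProduct, mulVec, Finset.mul_sum]
  refine Fintype.sum_equiv finFunctionFinEquiv.symm _ _ fun i =>
    Fintype.sum_equiv finFunctionFinEquiv.symm _ _ fun j => ?_
  rw [littleCoef_blockStartN_add hN, Equiv.apply_symm_apply, Equiv.apply_symm_apply]
  ring

lemma norm_littleBlockForm_le {N : ℕ} (hN : 0 < N) {x : ℕ → ℂ} (hx : ∀ j, ‖x j‖ ≤ 1) (μ : ℕ) :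
    ‖littleBlockForm N x μ‖ ≤ 1 / ((μ : ℝ) + 1) ^ 2 := by
  have hbound := norm_dotProduct_mulVec_le (A := littleM N (μ + 1))
    (pow_nonneg (Nat.cast_nonneg N) (μ + 1))
    (by rw [littleM_conjTranspose_mul_self hN.ne']; simp)
    (x := fun r => x (blockStartN N μ + finFunctionFinEquiv r))
    (y := fun r => x (blockStartN N μ + finFunctionFinEquiv r)) (fun _ => hx _) (fun _ => hx _)
  have hweight : 0 ≤ littleWeight N μ := by rw [littleWeight_eq]; positivity
  rw [littleBlockForm_eq_littleWeight_mul hN, norm_mul, Complex.norm_real,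
    Real.norm_of_nonneg hweight]
  refine (mul_le_mul_of_nonneg_left hbound hweight).trans_eq ?_
  have hsqrt : √((N : ℝ) ^ (μ + 1)) = √N ^ (μ + 1) := by
    rw [← Real.sqrt_sq (by positivity : 0 ≤ √N ^ (μ + 1)), ← pow_mul, mul_comm, pow_mul,
      Real.sq_sqrt (Nat.cast_nonneg N)]
  have hpos : 0 < √N := Real.sqrt_pos.2 (Nat.cast_pos.2 hN)
  simp only [Fintype.card_fun, Fintype.card_fin, Nat.cast_pow, hsqrt, littleWeight_eq]
  field_simp
  ring

lemma hasSum_one_div_succ_sq :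
    HasSum (fun μ : ℕ => 1 / ((μ : ℝ) + 1) ^ 2) (Real.pi ^ 2 / 6) := by
  have h := (hasSum_nat_add_iff' (f := fun n : ℕ => 1 / (n : ℝ) ^ 2) 1).2 hasSum_zeta_two
  norm_num at h
  simpa [one_div] using h

theorem tendsto_littleForm {N : ℕ} (hN : 0 < N) {x : ℕ → ℂ} (hx : ∀ j, ‖x j‖ ≤ 1) :
    Tendsto (littleForm N x) atTop (𝓝 (∑' μ, littleBlockForm N x μ)) := by
  rw [funext (littleForm_eq_tsum hN x)]
  refine tendsto_tsum_of_dominated_convergence hasSum_one_div_succ_sq.summable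
    (fun μ => tendsto_const_nhds.congr' ?_)
    (Eventually.of_forall fun M => norm_littleBlockForm_le hN
      fun j => (norm_indicator_le_norm_self x j).trans (hx j))
  filter_upwards [eventually_ge_atTop (blockStartN N (μ + 1))] with M hM
  exact (littleBlockForm_indicator_of_le N x hM).symm

lemma sum_norm_littleCoef_block {N : ℕ} (hN : 0 < N) (μ : ℕ) :
    ∑ p : Fin (N ^ (μ + 1)) × Fin (N ^ (μ + 1)),
      ‖littleCoef N (blockStartN N μ + p.1) (blockStartN N μ + p.2)‖ =
      √N ^ (μ + 1) / ((μ : ℝ) + 1) ^ 2 := by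
  have hN' : (N : ℝ) = √N ^ 2 := (Real.sq_sqrt (Nat.cast_nonneg N)).symm
  have hpos : 0 < √N := Real.sqrt_pos.2 (Nat.cast_pos.2 hN)
  simp only [littleCoef_blockStartN_add hN, norm_mul, Complex.norm_real, norm_littleM_apply,
    littleWeight_eq, Finset.sum_const, Finset.card_univ, Fintype.card_prod, Fintype.card_fin]
  rw [Real.norm_of_nonneg (by positivity), nsmul_eq_mul]
  push_cast
  generalize √(N : ℝ) = t at hN' hpos ⊢
  rw [hN']
  field_simp
  ring

lemma tendsto_pow_succ_div_sq_atTop {r : ℝ} (hr : 1 < r) :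
    Tendsto (fun μ : ℕ => r ^ (μ + 1) / ((μ : ℝ) + 1) ^ 2) atTop atTop := by
  have h := (tendsto_nhdsWithin_iff.2 ⟨tendsto_pow_const_div_const_pow_of_one_lt 2 hr,
    (eventually_gt_atTop 0).mono fun n hn =>
      div_pos (pow_pos (Nat.cast_pos.2 hn) 2) (pow_pos (zero_lt_one.trans hr) n)⟩)
    |>.inv_tendsto_nhdsGT_zero
  simp only [Pi.inv_def, inv_div] at h
  exact_mod_cast (tendsto_add_atTop_iff_nat 1).2 h

theorem not_summable_norm_littleCoef {N : ℕ} (hN : 1 < N) :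
    ¬ Summable (fun mn : ℕ × ℕ => ‖littleCoef N mn.1 mn.2‖) := by
  intro hsum
  have hblock (μ : ℕ) :
      √N ^ (μ + 1) / ((μ : ℝ) + 1) ^ 2 ≤ ∑' mn : ℕ × ℕ, ‖littleCoef N mn.1 mn.2‖ := by
    have hinj : Function.Injective fun p : Fin (N ^ (μ + 1)) × Fin (N ^ (μ + 1)) =>
        (blockStartN N μ + p.1, blockStartN N μ + p.2) := by
      rintro ⟨i, j⟩ ⟨i', j'⟩ h
      simp only [Prod.mk.injEq, Nat.add_left_cancel_iff, Fin.val_inj] at h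
      rw [h.1, h.2]
    rw [← sum_norm_littleCoef_block (by omega) μ, ← tsum_fintype (L := .unconditional _)]
    exact tsum_comp_le_tsum_of_inj hsum (fun _ => norm_nonneg _) hinj
  refine not_bddAbove_of_tendsto_atTop (tendsto_pow_succ_div_sq_atTop ?_)
    ⟨_, Set.forall_mem_range.2 hblock⟩
  rw [Real.lt_sqrt zero_le_one]
  exact_mod_cast (by omega : 1 < N)

/-- For `N > 2`, Littlewood's quadratic form `M(x)` is defined on the closed
unit polydisc `𝒮` (its square partial sums converge there) and satisfies
`|M(x)| ≤ ∑_{μ≥1} 1/μ² = π²/6` on `𝒮`, while the sum of the moduli of its coefficients,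
`∑_{μ≥1} N^{μ/2}/μ²`, diverges. -/
theorem statement18 (N : ℕ) (hN : 2 < N) :
    (∃ S : (ℕ → ℂ) → ℂ, ∀ x : ℕ → ℂ, (∀ j, ‖x j‖ ≤ 1) →
      Filter.Tendsto (fun M => ∑ m ∈ Finset.range M, ∑ n ∈ Finset.range M,
          littleCoef N m n * x m * x n) Filter.atTop (𝓝 (S x)) ∧
        ‖S x‖ ≤ Real.pi ^ 2 / 6) ∧
    ¬ Summable (fun mn : ℕ × ℕ => ‖littleCoef N mn.1 mn.2‖) := by
  have hN0 : 0 < N := by omega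
  refine ⟨⟨fun x => ∑' μ, littleBlockForm N x μ, fun x hx => ⟨tendsto_littleForm hN0 hx, ?_⟩⟩,
    not_summable_norm_littleCoef (by omega)⟩
  exact tsum_of_norm_bounded hasSum_one_div_succ_sq (norm_littleBlockForm_le hN0 hx)
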